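/- Let α_{n,i} : [n] → [n+1] denote the unique strictly increasing map whose image does not contain i. The kernel of the surjective algebra homomorphism k𝒞₊ → k𝒞 induced by π_a (sending α to π_a(α), i.e., i ↦ α(i+1) − 1) is generated, as a left ideal, by the elements α_{m,1} − α_{m,2} for m ≥ 1. -/

import Mathlib

/-!
`π_a` identifies `α_{m,1}` and `α_{m,2}` and respects composition, so the left ideal generated by
their differences lies in the kernel. Conversely, let `σ β` extend `β : [m] → [n]` by a
new minimum sent to the minimum. Every `f : [m+1] → [n+1]` differs from `σ (π_a f)` by an
element of that ideal: either `f 0 = 0` and `f = σ (π_a f)`, or, for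
`b = (0, f) : [m+2] → [n+1]`, `f = b ∘ α_{m,1}` and `σ (π_a f) = b ∘ α_{m,2}`. A kernel
element `x` has `∑ x_f σ (π_a f) = 0`, hence `x = ∑ x_f (f - σ (π_a f))`.
-/

/-- Morphisms of the category with objects `[o m]` and strictly increasing maps;
`o = fun m => m + 1` gives `𝒞₊`, and `o = id` gives `𝒞`. -/
def MorF (o : ℕ → ℕ) : Type := Σ m n : ℕ, Fin (o m) ↪o Fin (o n)

variable {o : ℕ → ℕ} (k : Type) [CommRing k]

/-- Product of two basis elements of the category algebra. -/
noncomputable def mulB (a b : MorF o) : MorF o →₀ k :=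
  if h : b.2.1 = a.1 then
    Finsupp.single ⟨b.1, a.2.1, (h ▸ b.2.2 : Fin (o b.1) ↪o Fin (o a.1)).trans a.2.2⟩ 1
  else 0

/-- The multiplication of the category algebra, extended bilinearly. -/
noncomputable def algMul (x y : MorF o →₀ k) : MorF o →₀ k :=
  x.sum fun a c => y.sum fun b d => (c * d) • mulB k a b

/-- `π_a` on a strictly increasing map `[m+1] → [n+1]`: `i ↦ α(i+1) - 1`. -/
def piAEmb {m n : ℕ} (f : Fin (m + 1) ↪o Fin (n + 1)) : Fin m ↪o Fin n :=
  OrderEmbedding.ofStrictMono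
    (fun i => (f i.succ).pred (Fin.pos_iff_ne_zero.mp
      (lt_of_le_of_lt (Fin.zero_le _) (f.strictMono (Fin.succ_pos i)))))
    (by
      intro i j h
      have h1 := Fin.lt_def.mp (f.strictMono (Fin.succ_lt_succ_iff.mpr h))
      have h2 := Fin.lt_def.mp (f.strictMono (Fin.succ_pos i))
      simp only [Fin.lt_def, Fin.coe_pred]
      omega)

/-- The functor `π_a` on morphisms of `𝒞₊`. -/
def piATotal (a : MorF (fun m => m + 1)) : MorF id := ⟨a.1, a.2.1, piAEmb a.2.2⟩

/-- `α_{m,i} : [m] → [m+1]`, the unique strictly increasing map omitting `i` from its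
image (`Fin.succAbove` in 0-indexed notation), as a basis element of `k𝒞₊`. -/
def alphaMor (m : ℕ) (i : Fin (m + 2)) : MorF (fun m => m + 1) :=
  ⟨m, m + 1, Fin.succAboveOrderEmb i⟩

theorem Finsupp.ker_lmapDomain_le_span_sub_single {α β R : Type*} [Ring R] (p : α → β)
    (s : β → α) :
    LinearMap.ker (Finsupp.lmapDomain R R p) ≤
      Submodule.span R
        (Set.range fun a => Finsupp.single a (1 : R) - Finsupp.single (s (p a)) 1) := by
  intro x hx
  rw [LinearMap.mem_ker, Finsupp.lmapDomain_apply] at hx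
  have hx' :
      x = x.sum fun a c => c • (Finsupp.single a (1 : R) - Finsupp.single (s (p a)) 1) :=
    calc x = x.sum Finsupp.single - Finsupp.mapDomain s (Finsupp.mapDomain p x) := by
          rw [hx, Finsupp.mapDomain_zero, sub_zero, Finsupp.sum_single]
      _ = _ := by
          rw [← Finsupp.mapDomain_comp, Finsupp.mapDomain, ← Finsupp.sum_sub]
          simp [smul_sub]
  rw [hx']
  exact Submodule.finsuppSum_mem _ _ _ _ fun a _ =>
    Submodule.smul_mem _ _ (Submodule.subset_span ⟨a, rfl⟩)

section Embeddings

variable {m n p : ℕ}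

theorem succ_piAEmb_apply (f : Fin (m + 1) ↪o Fin (n + 1)) (i : Fin m) :
    (piAEmb f i).succ = f i.succ :=
  Fin.succ_pred _ ((Fin.zero_le _).trans_lt (f.strictMono (Fin.succ_pos i))).ne'

theorem piAEmb_trans (f : Fin (m + 1) ↪o Fin (n + 1)) (g : Fin (n + 1) ↪o Fin (p + 1)) :
    piAEmb (f.trans g) = (piAEmb f).trans (piAEmb g) := by
  refine DFunLike.ext _ _ fun i => Fin.succ_injective _ ?_
  simp only [succ_piAEmb_apply, RelEmbedding.coe_trans, Function.comp_apply]

theorem piAEmb_succAboveOrderEmb_zero (m : ℕ) :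
    piAEmb (Fin.succAboveOrderEmb (0 : Fin (m + 2))) = piAEmb (Fin.succAboveOrderEmb 1) := by
  refine DFunLike.ext _ _ fun i => Fin.succ_injective _ ?_
  simp [succ_piAEmb_apply]

def consOrderEmb (c : Fin n) (f : Fin m ↪o Fin n) (hc : ∀ j, c < f j) :
    Fin (m + 1) ↪o Fin n :=
  OrderEmbedding.ofStrictMono (Fin.cons c f) (Fin.strictMono_cons.2 ⟨hc, f.strictMono⟩)

@[simp]
theorem consOrderEmb_succ (c : Fin n) (f : Fin m ↪o Fin n) (hc : ∀ j, c < f j) (j : Fin m) :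
    consOrderEmb c f hc j.succ = f j :=
  rfl

end Embeddings

def MorF.mk (o : ℕ → ℕ) {m n : ℕ} (f : Fin (o m) ↪o Fin (o n)) : MorF o :=
  ⟨m, n, f⟩

@[elab_as_elim]
theorem MorF.ind {P : MorF o → Prop}
    (mk : ∀ {m n : ℕ} (f : Fin (o m) ↪o Fin (o n)), P (.mk o f)) (a : MorF o) : P a :=
  mk a.2.2

theorem piATotal_mk {m n : ℕ} (f : Fin (m + 1) ↪o Fin (n + 1)) :
    piATotal (.mk (· + 1) f) = .mk id (piAEmb f) :=
  rfl

theorem alphaMor_eq_mk (m : ℕ) (i : Fin (m + 2)) :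
    alphaMor m i = .mk (· + 1) (Fin.succAboveOrderEmb i) :=
  rfl

theorem piATotal_alphaMor_zero (m : ℕ) : piATotal (alphaMor m 0) = piATotal (alphaMor m 1) := by
  rw [alphaMor_eq_mk, alphaMor_eq_mk, piATotal_mk, piATotal_mk, piAEmb_succAboveOrderEmb_zero]

def consZeroMor (x : MorF id) : MorF (· + 1) :=
  .mk (· + 1) (consOrderEmb (m := x.1) (n := x.2.1 + 1) 0 (x.2.2.trans (Fin.succOrderEmb _))
    fun _ => Fin.succ_pos _)

theorem eq_consZeroMor_piATotal {m n : ℕ} {f g : Fin (m + 1) ↪o Fin (n + 1)} (h0 : g 0 = 0)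
    (hsucc : ∀ j : Fin m, g j.succ = f j.succ) :
    MorF.mk (· + 1) g = consZeroMor (piATotal (.mk (· + 1) f)) := by
  refine congrArg (MorF.mk (· + 1)) (DFunLike.ext _ _ fun j => ?_)
  cases j using Fin.cases with
  | zero => exact h0
  | succ j => exact (hsucc j).trans (succ_piAEmb_apply f j).symm

def piAKerGens : Set (MorF (· + 1) →₀ k) :=
  {x | ∃ m : ℕ, x = Finsupp.single (alphaMor m 0) (1 : k) - Finsupp.single (alphaMor m 1) 1} ∪
    {x | ∃ (y : MorF (· + 1) →₀ k) (m : ℕ),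
      x = algMul k y (Finsupp.single (alphaMor m 0) 1 - Finsupp.single (alphaMor m 1) 1)}

section Algebra

variable {k}

theorem mulB_mk {l m n : ℕ} (f : Fin (o m) ↪o Fin (o n)) (g : Fin (o l) ↪o Fin (o m)) :
    mulB k (.mk o f) (.mk o g) = Finsupp.single (.mk o (g.trans f)) 1 :=
  dif_pos rfl

theorem mulB_of_ne {a b : MorF o} (h : b.2.1 ≠ a.1) : mulB k a b = 0 :=
  dif_neg h

theorem mapDomain_piATotal_mulB (a b : MorF (· + 1)) :
    Finsupp.mapDomain piATotal (mulB k a b) = mulB k (piATotal a) (piATotal b) := by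
  by_cases h : b.2.1 = a.1
  · induction a using MorF.ind with | mk f => ?_
    induction b using MorF.ind with | mk g => ?_
    cases h
    rw [piATotal_mk, piATotal_mk, mulB_mk, mulB_mk, Finsupp.mapDomain_single, piATotal_mk,
      piAEmb_trans]
  · rw [mulB_of_ne h, mulB_of_ne (a := piATotal a) (b := piATotal b) h, Finsupp.mapDomain_zero]

theorem mapDomain_piATotal_algMul (x y : MorF (· + 1) →₀ k) :
    Finsupp.mapDomain piATotal (algMul k x y) =
      algMul k (x.mapDomain piATotal) (y.mapDomain piATotal) := by
  simp only [algMul, Finsupp.mapDomain_sum, Finsupp.mapDomain_smul, mapDomain_piATotal_mulB]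
  rw [Finsupp.sum_mapDomain_index (by simp) (by simp [add_mul, add_smul, Finsupp.sum_add])]
  refine Finsupp.sum_congr fun a _ => ?_
  rw [Finsupp.sum_mapDomain_index (by simp) (by simp [mul_add, add_smul])]

theorem algMul_zero (x : MorF o →₀ k) : algMul k x 0 = 0 := by
  simp [algMul]

theorem algMul_sub (x y z : MorF o →₀ k) :
    algMul k x (y - z) = algMul k x y - algMul k x z := by
  simp only [algMul, ← Finsupp.sum_sub]
  exact Finsupp.sum_congr fun _ _ => Finsupp.sum_sub_index fun _ _ _ => by rw [mul_sub, sub_smul]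

theorem algMul_single_single (a b : MorF o) :
    algMul k (Finsupp.single a 1) (Finsupp.single b 1) = mulB k a b := by
  simp [algMul]

theorem piAKerGens_subset_ker :
    piAKerGens k ⊆ LinearMap.ker (Finsupp.lmapDomain k k piATotal) := by
  have hα (m : ℕ) : Finsupp.mapDomain piATotal
      (Finsupp.single (alphaMor m 0) (1 : k) - Finsupp.single (alphaMor m 1) 1) = 0 := by
    rw [Finsupp.mapDomain_sub, Finsupp.mapDomain_single, Finsupp.mapDomain_single,
      piATotal_alphaMor_zero, sub_self]
  rintro _ (⟨m, rfl⟩ | ⟨y, m, rfl⟩)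
  · exact hα m
  · simp [mapDomain_piATotal_algMul, hα, algMul_zero]

theorem single_sub_single_consZeroMor_mem_span (a : MorF (· + 1)) :
    Finsupp.single a (1 : k) - Finsupp.single (consZeroMor (piATotal a)) 1 ∈
      Submodule.span k (piAKerGens k) := by
  induction a using MorF.ind with | @mk m n f => ?_
  by_cases h0 : f 0 = 0
  · rw [← eq_consZeroMor_piATotal h0 fun _ => rfl, sub_self]
    exact zero_mem _
  have hpos (j : Fin (m + 1)) : 0 < f j :=
    (Fin.pos_iff_ne_zero.2 h0).trans_le (f.monotone (Fin.zero_le j))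
  set b := consOrderEmb 0 f hpos
  have hb0 : (Fin.succAboveOrderEmb 0).trans b = f := DFunLike.ext _ _ fun _ => rfl
  have hb1 : MorF.mk (· + 1) ((Fin.succAboveOrderEmb 1).trans b) =
      consZeroMor (piATotal (.mk (· + 1) f)) :=
    eq_consZeroMor_piATotal rfl fun j => by simp [b]
  have key : algMul k (Finsupp.single (.mk (· + 1) b) 1)
      (Finsupp.single (alphaMor m 0) 1 - Finsupp.single (alphaMor m 1) 1) =
        Finsupp.single (.mk (· + 1) f) 1 -
          Finsupp.single (consZeroMor (piATotal (.mk (· + 1) f))) 1 := by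
    rw [algMul_sub, algMul_single_single, algMul_single_single, alphaMor_eq_mk, alphaMor_eq_mk,
      mulB_mk, mulB_mk, hb0, hb1]
  exact Submodule.subset_span (Or.inr ⟨_, m, key.symm⟩)

end Algebra

/-- the kernel of the surjective algebra homomorphism `k𝒞₊ → k𝒞`
induced by the functor `π_a` is generated, as a left ideal, by the elements
`α_{m,1} - α_{m,2}`, `m ≥ 1`. -/
theorem ker_piA_alg_hom :
    LinearMap.ker (Finsupp.lmapDomain k k (piATotal) :
        (MorF (fun m => m + 1) →₀ k) →ₗ[k] (MorF id →₀ k)) =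
      Submodule.span k
        ({x | ∃ m : ℕ, x = Finsupp.single (alphaMor m 0) (1 : k) -
            Finsupp.single (alphaMor m 1) 1} ∪
         {x | ∃ (y : MorF (fun m => m + 1) →₀ k) (m : ℕ),
            x = algMul k y (Finsupp.single (alphaMor m 0) 1 -
              Finsupp.single (alphaMor m 1) 1)}) := by
  change _ = Submodule.span k (piAKerGens k)
  refine le_antisymm ?_ (Submodule.span_le.2 piAKerGens_subset_ker)
  refine (Finsupp.ker_lmapDomain_le_span_sub_single piATotal consZeroMor).trans
    (Submodule.span_le.2 ?_)
  rintro _ ⟨a, rfl⟩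
  exact single_sub_single_consZeroMor_mem_span a
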